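/- Let L ≥ 1 be a positive integer, let I, T, N be positive reals, let σ_{y1},…,σ_{yL} be positive reals with Λhalf = diag(σ_{y1},…,σ_{yL}), and let λ2, λ3, τ2, τ3, C1, C2 be reals satisfying λ2 − τ2 ≠ 0, λ3 − τ3 ≠ 0, λ2 + (L−1)τ2 ≠ 0, λ3 + (L−1)τ3 ≠ 0, C1(λ3 − τ3) − C2(λ2 − τ2) ≠ 0, and C1(λ3 + (L−1)τ3) − C2(λ2 + (L−1)τ2) ≠ 0. Then the L×L matrix Ω = (I·T/N)·Λhalf·[C1·((λ2 − τ2)·I_L + τ2·J_L)^{-1} − C2·((λ3 − τ3)·I_L + τ3·J_L)^{-1}]^{-1}·Λhalf is well defined, and for every l ∈ {1,…,L} its l-th diagonal entry equals ((I·T/N)·σ_{yl}² / [C1(λ3 − τ3) − C2(λ2 − τ2)]) · ([C1·λ2·(λ3 − τ3)·(λ3 + (L−1)τ3) − C2·λ3·(λ2 − τ2)·(λ2 + (L−1)τ2)] / [C1(λ3 + (L−1)τ3) − C2(λ2 + (L−1)τ2)]). -/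

import Mathlib

open Matrix

/-- The u×u all-ones matrix over ℝ. -/
def allOnes (u : ℕ) : Matrix (Fin u) (Fin u) ℝ := Matrix.of fun _ _ => 1

/-! The matrices `a • 1 + b • allOnes L` form a commutative algebra spanned by the two
complementary idempotents `1 - P` and `P`, where `P = L⁻¹ • allOnes L` is the orthogonal
projection onto the constant vectors. In that basis products, inverses and linear
combinations are computed coordinatewise, so `Ω` is again of this form and its diagonal
entry is read off from the two eigenvalues of each matrix involved. -/

noncomputable def constProj (L : ℕ) : Matrix (Fin L) (Fin L) ℝ := (L : ℝ)⁻¹ • allOnes L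

/-- The matrix acting as `x` on the sum-zero vectors and as `y` on the constant vectors. -/
noncomputable def compoundSymm (L : ℕ) (x y : ℝ) : Matrix (Fin L) (Fin L) ℝ :=
  x • (1 - constProj L) + y • constProj L

lemma allOnes_mul_allOnes (L : ℕ) : allOnes L * allOnes L = (L : ℝ) • allOnes L := by
  ext i j
  simp [allOnes, Matrix.mul_apply]

section compoundSymm

variable {L : ℕ}

lemma constProj_mul_self [NeZero L] : constProj L * constProj L = constProj L := by
  have hL : (L : ℝ) ≠ 0 := Nat.cast_ne_zero.mpr (NeZero.ne L)
  simp only [constProj, smul_mul_smul, allOnes_mul_allOnes, smul_smul]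
  field_simp

lemma compoundSymm_mul [NeZero L] (x y x' y' : ℝ) :
    compoundSymm L x y * compoundSymm L x' y' = compoundSymm L (x * x') (y * y') := by
  have hP := constProj_mul_self (L := L)
  simp only [compoundSymm, add_mul, mul_add, smul_mul_smul, sub_mul, mul_sub, one_mul,
    mul_one, hP, sub_self, smul_zero, zero_add, add_zero]
  module

lemma compoundSymm_one_one : compoundSymm L 1 1 = 1 := by
  simp [compoundSymm]

lemma sub_smul_one_add_smul_allOnes_eq_compoundSymm [NeZero L] (lam tau : ℝ) :
    (lam - tau) • (1 : Matrix (Fin L) (Fin L) ℝ) + tau • allOnes L =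
      compoundSymm L (lam - tau) (lam + (L - 1) * tau) := by
  have hL : (L : ℝ) ≠ 0 := Nat.cast_ne_zero.mpr (NeZero.ne L)
  have hJ : allOnes L = (L : ℝ) • constProj L := by
    rw [constProj, smul_smul, mul_inv_cancel₀ hL, one_smul]
  rw [compoundSymm, hJ]
  module

lemma smul_compoundSymm_sub_smul_compoundSymm (c c' x y x' y' : ℝ) :
    c • compoundSymm L x y - c' • compoundSymm L x' y' =
      compoundSymm L (c * x - c' * x') (c * y - c' * y') := by
  simp only [compoundSymm]
  module

lemma compoundSymm_mul_inv [NeZero L] {x y : ℝ} (hx : x ≠ 0) (hy : y ≠ 0) :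
    compoundSymm L x y * compoundSymm L x⁻¹ y⁻¹ = 1 := by
  rw [compoundSymm_mul, mul_inv_cancel₀ hx, mul_inv_cancel₀ hy, compoundSymm_one_one]

lemma isUnit_compoundSymm [NeZero L] {x y : ℝ} (hx : x ≠ 0) (hy : y ≠ 0) :
    IsUnit (compoundSymm L x y) :=
  IsUnit.of_mul_eq_one _ (compoundSymm_mul_inv hx hy)

lemma inv_compoundSymm [NeZero L] {x y : ℝ} (hx : x ≠ 0) (hy : y ≠ 0) :
    (compoundSymm L x y)⁻¹ = compoundSymm L x⁻¹ y⁻¹ :=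
  inv_eq_right_inv (compoundSymm_mul_inv hx hy)

lemma compoundSymm_apply_self (x y : ℝ) (l : Fin L) :
    compoundSymm L x y l l = x * (1 - (L : ℝ)⁻¹) + y * (L : ℝ)⁻¹ := by
  simp [compoundSymm, constProj, allOnes]

lemma smul_inv_compoundSymm_sub_smul_inv_compoundSymm [NeZero L] (c c' : ℝ) {x y x' y' : ℝ}
    (hx : x ≠ 0) (hy : y ≠ 0) (hx' : x' ≠ 0) (hy' : y' ≠ 0) :
    c • (compoundSymm L x y)⁻¹ - c' • (compoundSymm L x' y')⁻¹ =
      compoundSymm L ((c * x' - c' * x) / (x * x')) ((c * y' - c' * y) / (y * y')) := by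
  rw [inv_compoundSymm hx hy, inv_compoundSymm hx' hy', smul_compoundSymm_sub_smul_compoundSymm]
  congr 1 <;> field_simp

end compoundSymm

lemma diagonal_mul_mul_diagonal_apply_self {L : ℕ} (σ : Fin L → ℝ)
    (M : Matrix (Fin L) (Fin L) ℝ) (l : Fin L) :
    (diagonal σ * M * diagonal σ) l l = σ l ^ 2 * M l l := by
  rw [mul_diagonal, diagonal_mul]
  ring

theorem diag_entry_common_icc_general
    (L : ℕ) (hL : 1 ≤ L) (I T N : ℝ)
    (σ : Fin L → ℝ)
    (lam2 lam3 tau2 tau3 C1 C2 : ℝ)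
    (h1 : lam2 - tau2 ≠ 0) (h2 : lam3 - tau3 ≠ 0)
    (h3 : lam2 + ((L : ℝ) - 1) * tau2 ≠ 0) (h4 : lam3 + ((L : ℝ) - 1) * tau3 ≠ 0)
    (h5 : C1 * (lam3 - tau3) - C2 * (lam2 - tau2) ≠ 0)
    (h6 : C1 * (lam3 + ((L : ℝ) - 1) * tau3) - C2 * (lam2 + ((L : ℝ) - 1) * tau2) ≠ 0) :
    IsUnit ((lam2 - tau2) • (1 : Matrix (Fin L) (Fin L) ℝ) + tau2 • allOnes L) ∧
    IsUnit ((lam3 - tau3) • (1 : Matrix (Fin L) (Fin L) ℝ) + tau3 • allOnes L) ∧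
    IsUnit (C1 • ((lam2 - tau2) • (1 : Matrix (Fin L) (Fin L) ℝ) + tau2 • allOnes L)⁻¹ -
            C2 • ((lam3 - tau3) • (1 : Matrix (Fin L) (Fin L) ℝ) + tau3 • allOnes L)⁻¹) ∧
    ∀ l : Fin L,
      ((I * T / N) •
        (Matrix.diagonal σ *
          (C1 • ((lam2 - tau2) • (1 : Matrix (Fin L) (Fin L) ℝ) + tau2 • allOnes L)⁻¹ -
           C2 • ((lam3 - tau3) • (1 : Matrix (Fin L) (Fin L) ℝ) + tau3 • allOnes L)⁻¹)⁻¹ *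
          Matrix.diagonal σ)) l l =
      (I * T / N * (σ l) ^ 2 / (C1 * (lam3 - tau3) - C2 * (lam2 - tau2))) *
        ((C1 * lam2 * (lam3 - tau3) * (lam3 + ((L : ℝ) - 1) * tau3) -
          C2 * lam3 * (lam2 - tau2) * (lam2 + ((L : ℝ) - 1) * tau2)) /
         (C1 * (lam3 + ((L : ℝ) - 1) * tau3) - C2 * (lam2 + ((L : ℝ) - 1) * tau2))) := by
  have : NeZero L := ⟨by omega⟩
  simp only [sub_smul_one_add_smul_allOnes_eq_compoundSymm,
    smul_inv_compoundSymm_sub_smul_inv_compoundSymm C1 C2 h1 h3 h2 h4]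
  have hA := div_ne_zero h5 (mul_ne_zero h1 h2)
  have hS := div_ne_zero h6 (mul_ne_zero h3 h4)
  refine ⟨isUnit_compoundSymm h1 h3, isUnit_compoundSymm h2 h4, isUnit_compoundSymm hA hS,
    fun l => ?_⟩
  rw [inv_compoundSymm hA hS, Matrix.smul_apply, diagonal_mul_mul_diagonal_apply_self,
    compoundSymm_apply_self, smul_eq_mul, inv_div, inv_div]
  have key : (L : ℝ) * (C1 * lam2 * (lam3 - tau3) * (lam3 + (L - 1) * tau3) -
        C2 * lam3 * (lam2 - tau2) * (lam2 + (L - 1) * tau2)) =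
      (L - 1) * ((lam2 - tau2) * (lam3 - tau3)) *
          (C1 * (lam3 + (L - 1) * tau3) - C2 * (lam2 + (L - 1) * tau2)) +
        (lam2 + (L - 1) * tau2) * (lam3 + (L - 1) * tau3) *
          (C1 * (lam3 - tau3) - C2 * (lam2 - tau2)) := by
    ring
  -- As atoms, the two denominators are cleared by `field_simp` via `h5` and `h6`; expanded, they
  -- get rewritten into shapes those hypotheses no longer match.
  generalize C1 * (lam3 - tau3) - C2 * (lam2 - tau2) = A at *
  generalize C1 * (lam3 + (L - 1) * tau3) - C2 * (lam2 + (L - 1) * tau2) = S at *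
  generalize I * T / N = c
  field_simp
  linear_combination -(c * σ l ^ 2) * key

/-- analytical form of Theorem 1: under common ICC values across endpoints,
the covariance matrix Ω of the treatment effect estimators is well defined (all matrices
being inverted are invertible) and its l-th diagonal entry has the stated closed form. -/
theorem diag_entry_common_icc
    (L : ℕ) (hL : 1 ≤ L) (I T N : ℝ) (hI : 0 < I) (hT : 0 < T) (hN : 0 < N)
    (σ : Fin L → ℝ) (hσ : ∀ l, 0 < σ l)
    (lam2 lam3 tau2 tau3 C1 C2 : ℝ)
    (h1 : lam2 - tau2 ≠ 0) (h2 : lam3 - tau3 ≠ 0)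
    (h3 : lam2 + ((L : ℝ) - 1) * tau2 ≠ 0) (h4 : lam3 + ((L : ℝ) - 1) * tau3 ≠ 0)
    (h5 : C1 * (lam3 - tau3) - C2 * (lam2 - tau2) ≠ 0)
    (h6 : C1 * (lam3 + ((L : ℝ) - 1) * tau3) - C2 * (lam2 + ((L : ℝ) - 1) * tau2) ≠ 0) :
    IsUnit ((lam2 - tau2) • (1 : Matrix (Fin L) (Fin L) ℝ) + tau2 • allOnes L) ∧
    IsUnit ((lam3 - tau3) • (1 : Matrix (Fin L) (Fin L) ℝ) + tau3 • allOnes L) ∧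
    IsUnit (C1 • ((lam2 - tau2) • (1 : Matrix (Fin L) (Fin L) ℝ) + tau2 • allOnes L)⁻¹ -
            C2 • ((lam3 - tau3) • (1 : Matrix (Fin L) (Fin L) ℝ) + tau3 • allOnes L)⁻¹) ∧
    ∀ l : Fin L,
      ((I * T / N) •
        (Matrix.diagonal σ *
          (C1 • ((lam2 - tau2) • (1 : Matrix (Fin L) (Fin L) ℝ) + tau2 • allOnes L)⁻¹ -
           C2 • ((lam3 - tau3) • (1 : Matrix (Fin L) (Fin L) ℝ) + tau3 • allOnes L)⁻¹)⁻¹ *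
          Matrix.diagonal σ)) l l =
      (I * T / N * (σ l) ^ 2 / (C1 * (lam3 - tau3) - C2 * (lam2 - tau2))) *
        ((C1 * lam2 * (lam3 - tau3) * (lam3 + ((L : ℝ) - 1) * tau3) -
          C2 * lam3 * (lam2 - tau2) * (lam2 + ((L : ℝ) - 1) * tau2)) /
         (C1 * (lam3 + ((L : ℝ) - 1) * tau3) - C2 * (lam2 + ((L : ℝ) - 1) * tau2))) :=
  diag_entry_common_icc_general L hL I T N σ lam2 lam3 tau2 tau3 C1 C2 h1 h2 h3 h4 h5 h6
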